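/- The torsion covector C^i := ∑_r C_r^{ir} is given by the formula C^i = −((m−2)/(2K))·( ∑_r a_r^{ir} − n·a^i ), where n is the dimension. -/

import Mathlib

open Finset

noncomputable section

/-- `A(p) = ∑ a^{i₁…i_m} p_{i₁}⋯p_{i_m}`, where `m = M + 3 ≥ 3`. -/
def Afun {n M : ℕ} (a : (Fin (M + 3) → Fin n) → ℝ) (p : Fin n → ℝ) : ℝ :=
  ∑ ι : Fin (M + 3) → Fin n, a ι * ∏ t, p (ι t)

/-- `K(p) = A(p)^{1/m}`. -/
def Kfun {n M : ℕ} (a : (Fin (M + 3) → Fin n) → ℝ) (p : Fin n → ℝ) : ℝ :=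
  Afun a p ^ ((1 : ℝ) / (M + 3))

/-- `a^i = (∑ a^{i i₂…i_m} p_{i₂}⋯p_{i_m}) / K^{m-1}`. -/
def aU1 {n M : ℕ} (a : (Fin (M + 3) → Fin n) → ℝ) (i : Fin n) (p : Fin n → ℝ) : ℝ :=
  (∑ ι : Fin (M + 2) → Fin n, a (Fin.cons i ι) * ∏ t, p (ι t)) / Kfun a p ^ (M + 2)

/-- `a^{ij} = (∑ a^{i j i₃…i_m} p_{i₃}⋯p_{i_m}) / K^{m-2}`. -/
def aU2 {n M : ℕ} (a : (Fin (M + 3) → Fin n) → ℝ) (i j : Fin n) (p : Fin n → ℝ) : ℝ :=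
  (∑ ι : Fin (M + 1) → Fin n, a (Fin.cons i (Fin.cons j ι)) * ∏ t, p (ι t)) / Kfun a p ^ (M + 1)

/-- `a^{ijk} = (∑ a^{i j k i₄…i_m} p_{i₄}⋯p_{i_m}) / K^{m-3}`. -/
def aU3 {n M : ℕ} (a : (Fin (M + 3) → Fin n) → ℝ) (i j k : Fin n) (p : Fin n → ℝ) : ℝ :=
  (∑ ι : Fin M → Fin n, a (Fin.cons i (Fin.cons j (Fin.cons k ι))) * ∏ t, p (ι t)) / Kfun a p ^ M

/-- Partial derivative `∂f/∂p_k` of a function of `p`. -/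
def pd {n : ℕ} (f : (Fin n → ℝ) → ℝ) (k : Fin n) (p : Fin n → ℝ) : ℝ :=
  deriv (fun t => f (Function.update p k t)) (p k)

/-- Fundamental metrical d-tensor `g^{ij} = (1/2) ∂²(K²)/∂p_i∂p_j`. -/
def gU {n M : ℕ} (a : (Fin (M + 3) → Fin n) → ℝ) (i j : Fin n) (p : Fin n → ℝ) : ℝ :=
  (1 / 2 : ℝ) * pd (fun q => pd (fun r => Kfun a r ^ 2) j q) i p

/-- Angular metrical d-tensor `h^{ij} = K ∂²K/∂p_i∂p_j`. -/
def hU {n M : ℕ} (a : (Fin (M + 3) → Fin n) → ℝ) (i j : Fin n) (p : Fin n → ℝ) : ℝ :=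
  Kfun a p * pd (fun q => pd (Kfun a) j q) i p

/-- v-torsion d-tensor `C^{ijk} = -(1/2) ∂g^{ij}/∂p_k`. -/
def CU {n M : ℕ} (a : (Fin (M + 3) → Fin n) → ℝ) (i j k : Fin n) (p : Fin n → ℝ) : ℝ :=
  -(1 / 2 : ℝ) * pd (gU a i j) k p

/-- Symmetry of `a` in all of its `m` indices. -/
def aSym {n M : ℕ} (a : (Fin (M + 3) → Fin n) → ℝ) : Prop :=
  ∀ (σ : Equiv.Perm (Fin (M + 3))) (ι : Fin (M + 3) → Fin n), a (ι ∘ σ) = a ι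

/-- `a_i = ∑_s a_{is} a^s`, where `aLow` is the inverse matrix of `(a^{ij})`. -/
def aL {n M : ℕ} (a : (Fin (M + 3) → Fin n) → ℝ) (aLow : Matrix (Fin n) (Fin n) ℝ)
    (p : Fin n → ℝ) (i : Fin n) : ℝ :=
  ∑ s, aLow i s * aU1 a s p

/-- `a_i^{jk} = ∑_s a_{is} a^{sjk}`. -/
def aL3 {n M : ℕ} (a : (Fin (M + 3) → Fin n) → ℝ) (aLow : Matrix (Fin n) (Fin n) ℝ)
    (p : Fin n → ℝ) (i j k : Fin n) : ℝ :=
  ∑ s, aLow i s * aU3 a s j k p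

/-- `g_{ij} = (1/(m-1)) a_{ij} + ((m-2)/(m-1)) a_i a_j`, the inverse of `g^{ij}`. -/
def gL {n M : ℕ} (a : (Fin (M + 3) → Fin n) → ℝ) (aLow : Matrix (Fin n) (Fin n) ℝ)
    (p : Fin n → ℝ) (i j : Fin n) : ℝ :=
  (1 / (M + 2 : ℝ)) * aLow i j + ((M + 1 : ℝ) / (M + 2)) * aL a aLow p i * aL a aLow p j

/-- v-derivation components `C_i^{jk} = ∑_s g_{is} C^{sjk}`. -/
def CL {n M : ℕ} (a : (Fin (M + 3) → Fin n) → ℝ) (aLow : Matrix (Fin n) (Fin n) ℝ)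
    (p : Fin n → ℝ) (i j k : Fin n) : ℝ :=
  ∑ s, gL a aLow p i s * CU a s j k p

/-- v-curvature d-tensor `S^{hijk} = ∑_r (C_r^{ij} C^{rhk} - C_r^{ik} C^{rhj})`. -/
def Scurv {n M : ℕ} (a : (Fin (M + 3) → Fin n) → ℝ) (aLow : Matrix (Fin n) (Fin n) ℝ)
    (p : Fin n → ℝ) (h i j k : Fin n) : ℝ :=
  ∑ r, (CL a aLow p r i j * CU a r h k p - CL a aLow p r i k * CU a r h j p)

/-- `U^{hijk} = ∑_r (a_r^{ij} a^{rhk} - a_r^{ik} a^{rhj})`. -/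
def Ufun {n M : ℕ} (a : (Fin (M + 3) → Fin n) → ℝ) (aLow : Matrix (Fin n) (Fin n) ℝ)
    (p : Fin n → ℝ) (h i j k : Fin n) : ℝ :=
  ∑ r, (aL3 a aLow p r i j * aU3 a r h k p - aL3 a aLow p r i k * aU3 a r h j p)


/-!
Write `a^{i…}` for the `K`-normalised contractions of the form `A`. Since `A` is a symmetric
form of degree `m`, differentiating a contraction along `p_k` just inserts the index `k`:
`∂_k K = a^k`, `∂_k a^i = ((m-1)/K) (a^{ik} - a^i a^k)` and
`∂_k a^{ij} = ((m-2)/K) (a^{ijk} - a^{ij} a^k)`.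
Hence `g^{ij} = (m-1) a^{ij} - (m-2) a^i a^j` and `C^{ijk} = -((m-1)(m-2)/(2K)) B^{ijk}` with
`B^{ijk}` (`torsionBracket`) `= a^{ijk} - a^{ij} a^k - a^{ik} a^j - a^{jk} a^i + 2 a^i a^j a^k`.
Euler's identity `p_s a^{s…} = K a^{…}` gives `a_i = p_i / K` and `p_s B^{sjk} = 0`, so the
rank-one part of `g_{ij}` drops out of `C_r^{jk}`, and tracing `a_{rs} B^{sir}` over `r` leaves
`∑_r a_r^{ir} - n a^i`.
-/

open Function Filter Topology
open scoped Matrix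

def homForm {n m : ℕ} (b : (Fin m → Fin n) → ℝ) (p : Fin n → ℝ) : ℝ :=
  ∑ ι : Fin m → Fin n, b ι * ∏ t, p (ι t)

def IsSymmCoeff {n m : ℕ} (b : (Fin m → Fin n) → ℝ) : Prop :=
  ∀ (σ : Equiv.Perm (Fin m)) (ι : Fin m → Fin n), b (ι ∘ σ) = b ι

namespace IsSymmCoeff

variable {n m : ℕ}

theorem cons {b : (Fin (m + 1) → Fin n) → ℝ} (hb : IsSymmCoeff b) (x : Fin n) :
    IsSymmCoeff fun ι => b (Fin.cons x ι) := by
  intro σ ι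
  have hcomp : (Fin.cons x ι : Fin (m + 1) → Fin n) ∘ Equiv.Perm.decomposeFin.symm (0, σ) =
      Fin.cons x (ι ∘ σ) := by
    funext j
    cases j using Fin.cases <;> simp
  simpa [hcomp] using hb (Equiv.Perm.decomposeFin.symm (0, σ)) (Fin.cons x ι)

theorem cons_cons_comm {b : (Fin (m + 2) → Fin n) → ℝ} (hb : IsSymmCoeff b) (x y : Fin n)
    (ι : Fin m → Fin n) : b (Fin.cons x (Fin.cons y ι)) = b (Fin.cons y (Fin.cons x ι)) := by
  rw [← hb (Equiv.swap 0 1)]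
  congr 1
  funext j
  refine Fin.cases ?_ (Fin.cases ?_ fun k => ?_) j
  · simp
  · simp
  · rw [comp_apply, Equiv.swap_apply_of_ne_of_ne (Fin.succ_ne_zero _)
      (by simp [Fin.ext_iff])]
    simp

end IsSymmCoeff

theorem homForm_eq_sum_cons {n m : ℕ} (b : (Fin (m + 1) → Fin n) → ℝ) (p : Fin n → ℝ) :
    homForm b p = ∑ x, p x * homForm (fun ι => b (Fin.cons x ι)) p := by
  simp only [homForm, mul_sum]
  rw [← (Fin.consEquiv fun _ => Fin n).sum_comp, Fintype.sum_prod_type]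
  simp [Fin.consEquiv, Fin.prod_univ_succ, mul_left_comm]

theorem continuous_homForm {n m : ℕ} (b : (Fin m → Fin n) → ℝ) :
    Continuous (homForm b) := by
  unfold homForm
  fun_prop

section HomFormDeriv

variable {n m : ℕ}

theorem hasDerivAt_homForm_update_of_cons {b : (Fin (m + 1) → Fin n) → ℝ} {q : Fin n → ℝ}
    {k : Fin n} {d : Fin n → ℝ}
    (hd : ∀ x, HasDerivAt (fun t => homForm (fun ι => b (Fin.cons x ι)) (update q k t)) (d x)
      (q k)) :
    HasDerivAt (fun t => homForm b (update q k t))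
      (homForm (fun ι => b (Fin.cons k ι)) q + ∑ x, q x * d x) (q k) := by
  simp_rw [homForm_eq_sum_cons b]
  have hsum := HasDerivAt.fun_sum (u := univ) fun x _ =>
    (hasDerivAt_pi.mp (hasDerivAt_update q k (q k)) x).fun_mul (hd x)
  refine hsum.congr_deriv ?_
  simp [Pi.single_apply, sum_add_distrib]

theorem IsSymmCoeff.hasDerivAt_homForm_update {b : (Fin (m + 1) → Fin n) → ℝ}
    (hb : IsSymmCoeff b) (q : Fin n → ℝ) (k : Fin n) :
    HasDerivAt (fun t => homForm b (update q k t))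
      ((m + 1) * homForm (fun ι => b (Fin.cons k ι)) q) (q k) := by
  induction m with
  | zero =>
    have hconst : ∀ x, HasDerivAt (fun t => homForm (fun ι => b (Fin.cons x ι)) (update q k t))
        0 (q k) := fun x => by
      simpa [homForm] using hasDerivAt_const (q k) (homForm (fun ι => b (Fin.cons x ι)) q)
    simpa using hasDerivAt_homForm_update_of_cons hconst
  | succ m ih =>
    have h := hasDerivAt_homForm_update_of_cons fun x => ih (hb.cons x)
    convert h using 1
    simp_rw [hb.cons_cons_comm _ k, mul_left_comm (q _), ← mul_sum]
    rw [← homForm_eq_sum_cons (fun ι => b (Fin.cons k ι))]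
    push_cast
    ring

end HomFormDeriv

theorem pd_congr_of_eventuallyEq {n : ℕ} {f g : (Fin n → ℝ) → ℝ} {p : Fin n → ℝ}
    (h : f =ᶠ[𝓝 p] g) (k : Fin n) : pd f k p = pd g k p := by
  have hupd : Tendsto (update p k) (𝓝 (p k)) (𝓝 p) :=
    (continuous_const.update k continuous_id).tendsto' _ _ (update_eq_self k p)
  exact (h.comp_tendsto hupd).deriv_eq

theorem hasDerivAt_div_pow {N K : ℝ → ℝ} {N' K' x : ℝ} (d : ℕ)
    (hN : HasDerivAt N ((d + 1) * N') x) (hK : HasDerivAt K K' x) (hKx : K x ≠ 0) :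
    HasDerivAt (fun t => N t / K t ^ (d + 1))
      ((d + 1) / K x * (N' / K x ^ d - N x / K x ^ (d + 1) * K')) x := by
  refine (hN.div (hK.fun_pow (d + 1)) (pow_ne_zero _ hKx)).congr_deriv ?_
  rw [Nat.add_sub_cancel]
  field_simp
  push_cast
  ring

def torsionBracket {n M : ℕ} (a : (Fin (M + 3) → Fin n) → ℝ) (i j k : Fin n)
    (q : Fin n → ℝ) : ℝ :=
  aU3 a i j k q - aU2 a i j q * aU1 a k q - aU2 a i k q * aU1 a j q - aU2 a j k q * aU1 a i q
    + 2 * aU1 a i q * aU1 a j q * aU1 a k q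

section Normalized

variable {n M : ℕ} {a : (Fin (M + 3) → Fin n) → ℝ} {q : Fin n → ℝ}

theorem Afun_eq_homForm : Afun a q = homForm a q := rfl

theorem aU1_eq_homForm (i : Fin n) :
    aU1 a i q = homForm (fun ι => a (Fin.cons i ι)) q / Kfun a q ^ (M + 2) := rfl

theorem aU2_eq_homForm (i j : Fin n) :
    aU2 a i j q = homForm (fun ι => a (Fin.cons i (Fin.cons j ι))) q / Kfun a q ^ (M + 1) := rfl

theorem aU3_eq_homForm (i j k : Fin n) :
    aU3 a i j k q =
      homForm (fun ι => a (Fin.cons i (Fin.cons j (Fin.cons k ι)))) q / Kfun a q ^ M := rfl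

theorem Kfun_pos (hq : 0 < Afun a q) : 0 < Kfun a q :=
  Real.rpow_pos_of_pos hq _

theorem Kfun_pow (hq : 0 < Afun a q) : Kfun a q ^ (M + 3) = Afun a q := by
  have h := Real.rpow_inv_natCast_pow hq.le (n := M + 3) (by omega)
  rwa [show ((M + 3 : ℕ) : ℝ)⁻¹ = 1 / (M + 3) by push_cast; ring] at h

theorem eventually_Afun_pos (hq : 0 < Afun a q) : ∀ᶠ r in 𝓝 q, 0 < Afun a r :=
  (continuous_homForm a).continuousAt.eventually (lt_mem_nhds hq)

theorem aU2_comm (hsym : aSym a) (i j : Fin n) : aU2 a i j q = aU2 a j i q := by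
  simp only [aU2, IsSymmCoeff.cons_cons_comm hsym i j]

theorem aU3_rotate (hsym : aSym a) (i j k : Fin n) : aU3 a i j k q = aU3 a j k i q := by
  simp only [aU3, IsSymmCoeff.cons_cons_comm hsym i j,
    IsSymmCoeff.cons_cons_comm (IsSymmCoeff.cons hsym j) i k]



theorem hasDerivAt_Kfun_update (hsym : aSym a) (hq : 0 < Afun a q) (k : Fin n) :
    HasDerivAt (fun t => Kfun a (update q k t)) (aU1 a k q) (q k) := by
  have hA := IsSymmCoeff.hasDerivAt_homForm_update hsym q k
  have hAq : Afun a (update q k (q k)) ≠ 0 := by rw [update_eq_self]; exact hq.ne'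
  refine (hA.rpow_const (p := 1 / (M + 3)) (Or.inl hAq)).congr_deriv ?_
  have hK := Kfun_pos hq
  rw [update_eq_self, ← Afun_eq_homForm (a := a), Real.rpow_sub_one hq.ne', aU1_eq_homForm]
  change _ * _ * (Kfun a q / _) = _
  rw [← Kfun_pow hq]
  field_simp
  push_cast
  ring

theorem hasDerivAt_aU1_update (hsym : aSym a) (hq : 0 < Afun a q) (i k : Fin n) :
    HasDerivAt (fun t => aU1 a i (update q k t))
      ((M + 2) / Kfun a q * (aU2 a i k q - aU1 a i q * aU1 a k q)) (q k) := by
  have hN := IsSymmCoeff.hasDerivAt_homForm_update (IsSymmCoeff.cons hsym i) q k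
  refine (hasDerivAt_div_pow (M + 1) (by exact_mod_cast hN) (hasDerivAt_Kfun_update hsym hq k)
    (by rw [update_eq_self]; exact (Kfun_pos hq).ne')).congr_deriv ?_
  rw [update_eq_self, aU2_eq_homForm, aU1_eq_homForm i]
  simp only [homForm]
  push_cast
  ring

theorem hasDerivAt_aU2_update (hsym : aSym a) (hq : 0 < Afun a q) (i j k : Fin n) :
    HasDerivAt (fun t => aU2 a i j (update q k t))
      ((M + 1) / Kfun a q * (aU3 a i j k q - aU2 a i j q * aU1 a k q)) (q k) := by
  have hN := IsSymmCoeff.hasDerivAt_homForm_update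
    (IsSymmCoeff.cons (IsSymmCoeff.cons hsym i) j) q k
  refine (hasDerivAt_div_pow M hN (hasDerivAt_Kfun_update hsym hq k)
    (by rw [update_eq_self]; exact (Kfun_pos hq).ne')).congr_deriv ?_
  rw [update_eq_self]
  rfl



theorem pd_Kfun_sq (hsym : aSym a) (hq : 0 < Afun a q) (j : Fin n) :
    pd (fun r => Kfun a r ^ 2) j q = 2 * Kfun a q * aU1 a j q := by
  rw [pd, ((hasDerivAt_Kfun_update hsym hq j).fun_pow 2).deriv, update_eq_self]
  ring

theorem gU_eq (hsym : aSym a) (hq : 0 < Afun a q) (i j : Fin n) :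
    gU a i j q = (M + 2) * aU2 a i j q - (M + 1) * aU1 a i q * aU1 a j q := by
  have hloc : (fun r => pd (fun r => Kfun a r ^ 2) j r) =ᶠ[𝓝 q]
      fun r => 2 * Kfun a r * aU1 a j r :=
    (eventually_Afun_pos hq).mono fun r hr => pd_Kfun_sq hsym hr j
  have hderiv := ((hasDerivAt_Kfun_update hsym hq i).const_mul 2).fun_mul
    (hasDerivAt_aU1_update hsym hq j i)
  have hK := (Kfun_pos hq).ne'
  rw [gU, pd_congr_of_eventuallyEq hloc, pd, hderiv.deriv, update_eq_self, aU2_comm hsym j i]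
  field_simp
  ring

theorem CU_eq (hsym : aSym a) (hq : 0 < Afun a q) (i j k : Fin n) :
    CU a i j k q = -((M + 1) * (M + 2) / (2 * Kfun a q)) * torsionBracket a i j k q := by
  have hloc : gU a i j =ᶠ[𝓝 q]
      fun r => (M + 2) * aU2 a i j r - (M + 1) * aU1 a i r * aU1 a j r :=
    (eventually_Afun_pos hq).mono fun r hr => gU_eq hsym hr i j
  have hderiv := ((hasDerivAt_aU2_update hsym hq i j k).const_mul ((M : ℝ) + 2)).fun_sub
    (((hasDerivAt_aU1_update hsym hq i k).const_mul ((M : ℝ) + 1)).fun_mul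
      (hasDerivAt_aU1_update hsym hq j k))
  have hK := (Kfun_pos hq).ne'
  rw [CU, pd_congr_of_eventuallyEq hloc, pd, hderiv.deriv, update_eq_self, torsionBracket]
  field_simp
  ring



theorem sum_mul_aU1 (hq : 0 < Afun a q) : ∑ s, q s * aU1 a s q = Kfun a q := by
  have hK := (Kfun_pos hq).ne'
  simp_rw [aU1_eq_homForm, mul_div_assoc', ← sum_div]
  rw [← homForm_eq_sum_cons, ← Afun_eq_homForm, ← Kfun_pow hq]
  field_simp
  ring

theorem sum_mul_aU2 (hsym : aSym a) (hq : 0 < Afun a q) (j : Fin n) :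
    ∑ s, q s * aU2 a s j q = Kfun a q * aU1 a j q := by
  have hK := (Kfun_pos hq).ne'
  simp_rw [aU2_comm hsym _ j, aU2_eq_homForm, mul_div_assoc', ← sum_div]
  rw [← homForm_eq_sum_cons (fun ι => a (Fin.cons j ι)), aU1_eq_homForm]
  field_simp
  ring

theorem sum_mul_aU3 (hsym : aSym a) (hq : 0 < Afun a q) (j k : Fin n) :
    ∑ s, q s * aU3 a s j k q = Kfun a q * aU2 a j k q := by
  have hK := (Kfun_pos hq).ne'
  simp_rw [aU3_rotate hsym _ j k, aU3_eq_homForm, mul_div_assoc', ← sum_div]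
  rw [← homForm_eq_sum_cons (fun ι => a (Fin.cons j (Fin.cons k ι))), aU2_eq_homForm]
  field_simp
  ring

theorem sum_mul_torsionBracket (hsym : aSym a) (hq : 0 < Afun a q) (j k : Fin n) :
    ∑ s, q s * torsionBracket a s j k q = 0 := by
  have hexpand : ∀ s, q s * torsionBracket a s j k q =
      q s * aU3 a s j k q - q s * aU2 a s j q * aU1 a k q - q s * aU2 a s k q * aU1 a j q
        - q s * aU1 a s q * aU2 a j k q + q s * aU1 a s q * (2 * aU1 a j q * aU1 a k q) :=
    fun s => by rw [torsionBracket]; ring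
  simp only [hexpand, sum_add_distrib, sum_sub_distrib, ← sum_mul, sum_mul_aU1 hq,
    sum_mul_aU2 hsym hq, sum_mul_aU3 hsym hq]
  ring

variable {aLow : Matrix (Fin n) (Fin n) ℝ}

theorem sum_aLow_mul_aU2 (hinv : aLow * (Matrix.of fun i j => aU2 a i j q) = 1) (r j : Fin n) :
    ∑ s, aLow r s * aU2 a s j q = if r = j then 1 else 0 := by
  simpa [Matrix.mul_apply, Matrix.one_apply] using congrFun (congrFun hinv r) j

theorem aL_eq (hsym : aSym a) (hq : 0 < Afun a q)
    (hinv : aLow * (Matrix.of fun i j => aU2 a i j q) = 1) (r : Fin n) :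
    aL a aLow q r = q r / Kfun a q := by
  have hK := (Kfun_pos hq).ne'
  have hvec :
      (fun s => aU1 a s q) = (Kfun a q)⁻¹ • ((Matrix.of fun i j => aU2 a i j q) *ᵥ q) := by
    funext s
    simp only [Pi.smul_apply, Matrix.mulVec, dotProduct, Matrix.of_apply, smul_eq_mul]
    simp_rw [aU2_comm hsym s, mul_comm (aU2 a _ s q), sum_mul_aU2 hsym hq s]
    field_simp
  change (aLow *ᵥ fun s => aU1 a s q) r = _
  rw [hvec, Matrix.mulVec_smul, Matrix.mulVec_mulVec, hinv, Matrix.one_mulVec, Pi.smul_apply,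
    smul_eq_mul, inv_mul_eq_div]

theorem CL_eq (hsym : aSym a) (hq : 0 < Afun a q)
    (hinv : aLow * (Matrix.of fun i j => aU2 a i j q) = 1) (r j k : Fin n) :
    CL a aLow q r j k = 1 / (M + 2) * ∑ s, aLow r s * CU a s j k q := by
  have hpCU : ∑ s, q s * CU a s j k q = 0 := by
    simp_rw [CU_eq hsym hq, mul_left_comm (q _), ← mul_sum, sum_mul_torsionBracket hsym hq,
      mul_zero]
  have hsplit : ∀ s, gL a aLow q r s * CU a s j k q =
      1 / (M + 2) * (aLow r s * CU a s j k q)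
        + (M + 1) / (M + 2) * (q r / Kfun a q) / Kfun a q * (q s * CU a s j k q) := fun s => by
    rw [gL, aL_eq hsym hq hinv, aL_eq hsym hq hinv]
    ring
  simp only [CL, hsplit, sum_add_distrib, ← mul_sum, hpCU]
  ring

theorem sum_aLow_mul_torsionBracket (hsym : aSym a) (hq : 0 < Afun a q)
    (hinv : aLow * (Matrix.of fun i j => aU2 a i j q) = 1) (r j k : Fin n) :
    ∑ s, aLow r s * torsionBracket a s j k q =
      aL3 a aLow q r j k - (if r = j then 1 else 0) * aU1 a k q
        - (if r = k then 1 else 0) * aU1 a j q - q r / Kfun a q * aU2 a j k q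
        + 2 * (q r / Kfun a q) * aU1 a j q * aU1 a k q := by
  have hexpand : ∀ s, aLow r s * torsionBracket a s j k q =
      aLow r s * aU3 a s j k q - aLow r s * aU2 a s j q * aU1 a k q
        - aLow r s * aU2 a s k q * aU1 a j q - aLow r s * aU1 a s q * aU2 a j k q
        + aLow r s * aU1 a s q * (2 * aU1 a j q * aU1 a k q) :=
    fun s => by rw [torsionBracket]; ring
  have haL : ∑ s, aLow r s * aU1 a s q = q r / Kfun a q := aL_eq hsym hq hinv r
  simp only [hexpand, sum_add_distrib, sum_sub_distrib, ← sum_mul, sum_aLow_mul_aU2 hinv, haL]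
  rw [aL3]
  ring

theorem sum_sum_aLow_mul_torsionBracket (hsym : aSym a) (hq : 0 < Afun a q)
    (hinv : aLow * (Matrix.of fun i j => aU2 a i j q) = 1) (i : Fin n) :
    ∑ r, ∑ s, aLow r s * torsionBracket a s i r q =
      ∑ r, aL3 a aLow q r i r - n * aU1 a i q := by
  have hK := (Kfun_pos hq).ne'
  have hqaU2 : ∑ r, q r / Kfun a q * aU2 a i r q = aU1 a i q := by
    simp_rw [aU2_comm hsym i, div_mul_eq_mul_div, ← sum_div, sum_mul_aU2 hsym hq i]
    field_simp
  have hqaU1 : ∑ r, 2 * (q r / Kfun a q) * aU1 a i q * aU1 a r q = 2 * aU1 a i q := by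
    have hterm : ∀ r, 2 * (q r / Kfun a q) * aU1 a i q * aU1 a r q =
        2 * aU1 a i q / Kfun a q * (q r * aU1 a r q) := fun r => by ring
    rw [sum_congr rfl fun r _ => hterm r, ← mul_sum, sum_mul_aU1 hq]
    field_simp
  simp only [sum_aLow_mul_torsionBracket hsym hq hinv, sum_add_distrib, sum_sub_distrib, hqaU2,
    hqaU1, ite_mul, one_mul, zero_mul, sum_ite_eq', mem_univ, if_true, sum_const, card_univ,
    Fintype.card_fin, nsmul_eq_mul]
  ring

end Normalized

theorem stmt_7_general {n M : ℕ} (a : (Fin (M + 3) → Fin n) → ℝ)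
    (hsym : aSym a) (p : Fin n → ℝ) (hA : 0 < Afun a p)
    (aLow : Matrix (Fin n) (Fin n) ℝ)
    (hInv₂ : aLow * (Matrix.of fun i j => aU2 a i j p) = 1) :
    ∀ i : Fin n,
      ∑ r, CL a aLow p r i r =
        -((M + 1 : ℝ) / (2 * Kfun a p)) *
          ((∑ r, aL3 a aLow p r i r) - (n : ℝ) * aU1 a i p) := by
  intro i
  have hK := (Kfun_pos hA).ne'
  simp_rw [CL_eq hsym hA hInv₂, CU_eq hsym hA, mul_left_comm (aLow _ _), ← mul_sum,
    sum_sum_aLow_mul_torsionBracket hsym hA hInv₂]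
  field_simp

/-- the torsion covector `C^i = ∑_r C_r^{ir}` satisfies
`C^i = -((m-2)/(2K)) (∑_r a_r^{ir} - n a^i)`, where `m = M + 3` and `n = dim M`. -/
theorem stmt_7 {n M : ℕ} (hn : 4 ≤ n) (a : (Fin (M + 3) → Fin n) → ℝ)
    (hsym : aSym a) (p : Fin n → ℝ) (hA : 0 < Afun a p)
    (aLow : Matrix (Fin n) (Fin n) ℝ)
    (hInv₁ : (Matrix.of fun i j => aU2 a i j p) * aLow = 1)
    (hInv₂ : aLow * (Matrix.of fun i j => aU2 a i j p) = 1) :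
    ∀ i : Fin n,
      ∑ r, CL a aLow p r i r =
        -((M + 1 : ℝ) / (2 * Kfun a p)) *
          ((∑ r, aL3 a aLow p r i r) - (n : ℝ) * aU1 a i p) :=
  stmt_7_general a hsym p hA aLow hInv₂
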